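/- The group Aut⁺(Heis(3,ℤ)) of automorphisms of Heis(3,ℤ) acting identically on the center is isomorphic to the semidirect product (ℤ ⊕ ℤ) ⋊ SL(2,ℤ), where SL(2,ℤ) acts on ℤ ⊕ ℤ by the natural matrix action. -/

import Mathlib

/-- The discrete Heisenberg group `Heis(3,ℤ)`: triples `(a,b,c)` of integers with
multiplication `(a₁,b₁,c₁)·(a₂,b₂,c₂) = (a₁+a₂, b₁+b₂, c₁+c₂+a₁b₂)`. -/
@[ext] structure Heis where
  a : ℤ
  b : ℤ
  c : ℤ

namespace Heis

instance : Mul Heis := ⟨fun x y => ⟨x.a + y.a, x.b + y.b, x.c + y.c + x.a * y.b⟩⟩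
instance : One Heis := ⟨⟨0, 0, 0⟩⟩
instance : Inv Heis := ⟨fun x => ⟨-x.a, -x.b, -x.c + x.a * x.b⟩⟩

@[simp] theorem mul_a (x y : Heis) : (x * y).a = x.a + y.a := rfl
@[simp] theorem mul_b (x y : Heis) : (x * y).b = x.b + y.b := rfl
@[simp] theorem mul_c (x y : Heis) : (x * y).c = x.c + y.c + x.a * y.b := rfl
@[simp] theorem one_a : (1 : Heis).a = 0 := rfl
@[simp] theorem one_b : (1 : Heis).b = 0 := rfl
@[simp] theorem one_c : (1 : Heis).c = 0 := rfl
@[simp] theorem inv_a (x : Heis) : x⁻¹.a = -x.a := rfl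
@[simp] theorem inv_b (x : Heis) : x⁻¹.b = -x.b := rfl
@[simp] theorem inv_c (x : Heis) : x⁻¹.c = -x.c + x.a * x.b := rfl

instance : Group Heis where
  mul_assoc x y z := by ext <;> simp <;> ring
  one_mul x := by ext <;> simp
  mul_one x := by ext <;> simp
  inv_mul_cancel x := by ext <;> simp

end Heis


/-- The natural (matrix) action of `GL(2,ℤ)` on `ℤ ⊕ ℤ` (written multiplicatively, as needed
for semidirect products). -/
def glPhi : GL (Fin 2) ℤ →* MulAut (Multiplicative (Fin 2 → ℤ)) where
  toFun g :=
    { toFun := fun v => Multiplicative.ofAdd ((g : Matrix (Fin 2) (Fin 2) ℤ).mulVec v.toAdd)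
      invFun := fun v =>
        Multiplicative.ofAdd (((g⁻¹ : GL (Fin 2) ℤ) : Matrix (Fin 2) (Fin 2) ℤ).mulVec v.toAdd)
      left_inv := fun v => by
        simp only [toAdd_ofAdd, Matrix.mulVec_mulVec, ← Matrix.GeneralLinearGroup.coe_mul,
          inv_mul_cancel, Units.val_one, Matrix.one_mulVec, ofAdd_toAdd]
      right_inv := fun v => by
        simp only [toAdd_ofAdd, Matrix.mulVec_mulVec, ← Matrix.GeneralLinearGroup.coe_mul,
          mul_inv_cancel, Units.val_one, Matrix.one_mulVec, ofAdd_toAdd]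
      map_mul' := fun v w => by simp only [toAdd_mul, Matrix.mulVec_add, ofAdd_add] }
  map_one' := by ext v; simp
  map_mul' := fun g h => by
    refine MulEquiv.ext fun v => ?_
    show Multiplicative.ofAdd (((g * h : GL (Fin 2) ℤ) : Matrix (Fin 2) (Fin 2) ℤ).mulVec v.toAdd) =
      Multiplicative.ofAdd ((g : Matrix (Fin 2) (Fin 2) ℤ).mulVec
        ((h : Matrix (Fin 2) (Fin 2) ℤ).mulVec v.toAdd))
    rw [Matrix.mulVec_mulVec, Matrix.GeneralLinearGroup.coe_mul]

/-- The natural matrix action of `SL(2,ℤ)` on `ℤ ⊕ ℤ`. -/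
def slPhi : Matrix.SpecialLinearGroup (Fin 2) ℤ →* MulAut (Multiplicative (Fin 2 → ℤ)) :=
  glPhi.comp Matrix.SpecialLinearGroup.toGL

namespace HeisAux

def N (p q r s a b : ℤ) : ℤ :=
  (p*a+q*b)*(r*a+s*b) - a*b - (p+r-1)*a - (q+s-1)*b

def D (p q r s a b : ℤ) : ℤ := N p q r s a b / 2

lemma even_N (p q r s a b : ℤ) (h : p*s - q*r = 1) : (2:ℤ) ∣ N p q r s a b := by
  have key : ∀ p q r s a b : ZMod 2, p*s - q*r = 1 →
      (p*a+q*b)*(r*a+s*b) - a*b - (p+r-1)*a - (q+s-1)*b = 0 := by decide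
  have h2 : ((p*s - q*r : ℤ) : ZMod 2) = 1 := by rw [h]; norm_num
  have h3 := key p q r s a b (by push_cast at h2 ⊢; exact h2)
  have h4 : ((N p q r s a b : ℤ) : ZMod 2) = 0 := by unfold N; push_cast; exact h3
  exact (ZMod.intCast_zmod_eq_zero_iff_dvd _ 2).mp h4

lemma two_mul_D (p q r s a b : ℤ) (h : p*s - q*r = 1) :
    2 * D p q r s a b = N p q r s a b :=
  Int.mul_ediv_cancel' (even_N p q r s a b h)

/-- raw automorphism candidate -/
def f (p q r s u₁ u₂ : ℤ) (x : Heis) : Heis :=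
  ⟨p*x.a + q*x.b, r*x.a + s*x.b, x.c + D p q r s x.a x.b + u₁*x.a + u₂*x.b⟩

@[simp] lemma f_a (p q r s u₁ u₂ : ℤ) (x : Heis) : (f p q r s u₁ u₂ x).a = p*x.a + q*x.b := rfl
@[simp] lemma f_b (p q r s u₁ u₂ : ℤ) (x : Heis) : (f p q r s u₁ u₂ x).b = r*x.a + s*x.b := rfl
@[simp] lemma f_c (p q r s u₁ u₂ : ℤ) (x : Heis) :
    (f p q r s u₁ u₂ x).c = x.c + D p q r s x.a x.b + u₁*x.a + u₂*x.b := rfl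

lemma D_zero (p q r s : ℤ) : D p q r s 0 0 = 0 := by
  unfold D N; norm_num

lemma f_one (p q r s u₁ u₂ : ℤ) : f p q r s u₁ u₂ 1 = 1 := by
  ext <;> simp [D_zero]

lemma f_mul (p q r s u₁ u₂ : ℤ) (h : p*s - q*r = 1) (x y : Heis) :
    f p q r s u₁ u₂ (x * y) = f p q r s u₁ u₂ x * f p q r s u₁ u₂ y := by
  ext
  · simp; ring
  · simp; ring
  · simp only [f_c, Heis.mul_c, f_a, f_b, Heis.mul_a, Heis.mul_b]
    refine mul_left_cancel₀ (a := (2:ℤ)) (by norm_num) ?_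
    have e1 := two_mul_D p q r s x.a x.b h
    have e2 := two_mul_D p q r s y.a y.b h
    have e3 := two_mul_D p q r s (x.a + y.a) (x.b + y.b) h
    unfold N at e1 e2 e3
    linear_combination e3 - e1 - e2 + (x.b*y.a - x.a*y.b) * h

/-- composition law -/
lemma f_comp (p₁ q₁ r₁ s₁ u₁ u₂ p₂ q₂ r₂ s₂ w₁ w₂ : ℤ)
    (h₁ : p₁*s₁ - q₁*r₁ = 1) (h₂ : p₂*s₂ - q₂*r₂ = 1) (x : Heis) :
    f p₁ q₁ r₁ s₁ u₁ u₂ (f p₂ q₂ r₂ s₂ w₁ w₂ x) =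
      f (p₁*p₂+q₁*r₂) (p₁*q₂+q₁*s₂) (r₁*p₂+s₁*r₂) (r₁*q₂+s₁*s₂)
        (w₁ + u₁*p₂ + u₂*r₂) (w₂ + u₁*q₂ + u₂*s₂) x := by
  have h₃ : (p₁*p₂+q₁*r₂)*(r₁*q₂+s₁*s₂) - (p₁*q₂+q₁*s₂)*(r₁*p₂+s₁*r₂) = 1 := by
    linear_combination (p₂*s₂ - q₂*r₂) * h₁ + h₂
  ext
  · simp; ring
  · simp; ring
  · simp only [f_c, f_a, f_b]
    refine mul_left_cancel₀ (a := (2:ℤ)) (by norm_num) ?_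
    have e1 := two_mul_D p₁ q₁ r₁ s₁ (p₂*x.a+q₂*x.b) (r₂*x.a+s₂*x.b) h₁
    have e2 := two_mul_D p₂ q₂ r₂ s₂ x.a x.b h₂
    have e3 := two_mul_D (p₁*p₂+q₁*r₂) (p₁*q₂+q₁*s₂) (r₁*p₂+s₁*r₂) (r₁*q₂+s₁*s₂) x.a x.b h₃
    unfold N at e1 e2 e3
    linear_combination e1 + e2 - e3
lemma D_id (a b : ℤ) : D 1 0 0 1 a b = 0 := by
  have : N 1 0 0 1 a b = 0 := by unfold N; ring
  unfold D; rw [this]; rfl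

lemma f_id (x : Heis) : f 1 0 0 1 0 0 x = x := by
  ext <;> simp [D_id]

def mkAut (p q r s u₁ u₂ : ℤ) (h : p*s - q*r = 1) : MulAut Heis where
  toFun := f p q r s u₁ u₂
  invFun := f s (-q) (-r) p (u₂*r - u₁*s) (u₁*q - u₂*p)
  left_inv x := by
    have h' : s*p - (-q)*(-r) = 1 := by linarith
    rw [f_comp s (-q) (-r) p (u₂*r - u₁*s) (u₁*q - u₂*p) p q r s u₁ u₂ h' h x]
    rw [show s*p + -q*r = 1 by linarith, show s*q + -q*s = 0 by ring,
      show -r*p + p*r = 0 by ring, show -r*q + p*s = 1 by linarith,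
      show u₁ + (u₂*r - u₁*s)*p + (u₁*q - u₂*p)*r = 0 by linear_combination (-u₁) * h,
      show u₂ + (u₂*r - u₁*s)*q + (u₁*q - u₂*p)*s = 0 by linear_combination (-u₂) * h,
      f_id]
  right_inv x := by
    have h' : s*p - (-q)*(-r) = 1 := by linarith
    rw [f_comp p q r s u₁ u₂ s (-q) (-r) p (u₂*r - u₁*s) (u₁*q - u₂*p) h h' x]
    rw [show p*s + q*(-r) = 1 by linarith, show p*(-q) + q*p = 0 by ring,
      show r*s + s*(-r) = 0 by ring, show r*(-q) + s*p = 1 by linarith,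
      show (u₂*r - u₁*s) + u₁*s + u₂*(-r) = 0 by ring,
      show (u₁*q - u₂*p) + u₁*(-q) + u₂*p = 0 by ring,
      f_id]
  map_mul' x y := f_mul p q r s u₁ u₂ h x y

@[simp] lemma mkAut_apply (p q r s u₁ u₂ : ℤ) (h : p*s - q*r = 1) (x : Heis) :
    mkAut p q r s u₁ u₂ h x = f p q r s u₁ u₂ x := rfl

-- generators
lemma X_zpow (n : ℤ) : (⟨1,0,0⟩ : Heis)^n = ⟨n,0,0⟩ := by
  induction n using Int.induction_on with
  | zero => rw [zpow_zero]; rfl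
  | succ n ih => rw [zpow_add_one, ih]; ext <;> simp
  | pred n ih => rw [zpow_sub_one, ih, show (⟨1,0,0⟩:Heis)⁻¹ = ⟨-1,0,0⟩ from rfl]
                 ext <;> simp <;> ring

lemma Y_zpow (n : ℤ) : (⟨0,1,0⟩ : Heis)^n = ⟨0,n,0⟩ := by
  induction n using Int.induction_on with
  | zero => rw [zpow_zero]; rfl
  | succ n ih => rw [zpow_add_one, ih]; ext <;> simp
  | pred n ih => rw [zpow_sub_one, ih, show (⟨0,1,0⟩:Heis)⁻¹ = ⟨0,-1,0⟩ from rfl]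
                 ext <;> simp <;> ring

lemma Z_zpow (n : ℤ) : (⟨0,0,1⟩ : Heis)^n = ⟨0,0,n⟩ := by
  induction n using Int.induction_on with
  | zero => rw [zpow_zero]; rfl
  | succ n ih => rw [zpow_add_one, ih]; ext <;> simp
  | pred n ih => rw [zpow_sub_one, ih, show (⟨0,0,1⟩:Heis)⁻¹ = ⟨0,0,-1⟩ from rfl]
                 ext <;> simp <;> ring

lemma decomp (x : Heis) :
    x = (⟨1,0,0⟩ : Heis)^x.a * (⟨0,1,0⟩ : Heis)^x.b * (⟨0,0,1⟩ : Heis)^(x.c - x.a*x.b) := by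
  rw [X_zpow, Y_zpow, Z_zpow]; ext <;> simp <;> ring

lemma central_mem (c : ℤ) : (⟨0,0,c⟩ : Heis) ∈ Subgroup.center Heis := by
  rw [Subgroup.mem_center_iff]
  intro g; ext <;> simp <;> ring

lemma center_ab {x : Heis} (hx : x ∈ Subgroup.center Heis) : x.a = 0 ∧ x.b = 0 := by
  rw [Subgroup.mem_center_iff] at hx
  have h1 := congrArg Heis.c (hx ⟨0,1,0⟩)
  have h2 := congrArg Heis.c (hx ⟨1,0,0⟩)
  simp at h1 h2
  omega

lemma f_central (p q r s u₁ u₂ c : ℤ) : f p q r s u₁ u₂ ⟨0,0,c⟩ = ⟨0,0,c⟩ := by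
  ext <;> simp [D_zero]
end HeisAux

namespace HeisSl
def glPhi : GL (Fin 2) ℤ →* MulAut (Multiplicative (Fin 2 → ℤ)) where
  toFun g :=
    { toFun := fun v => Multiplicative.ofAdd ((g : Matrix (Fin 2) (Fin 2) ℤ).mulVec v.toAdd)
      invFun := fun v =>
        Multiplicative.ofAdd (((g⁻¹ : GL (Fin 2) ℤ) : Matrix (Fin 2) (Fin 2) ℤ).mulVec v.toAdd)
      left_inv := fun v => by
        simp only [toAdd_ofAdd, Matrix.mulVec_mulVec, ← Matrix.GeneralLinearGroup.coe_mul,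
          inv_mul_cancel, Units.val_one, Matrix.one_mulVec, ofAdd_toAdd]
      right_inv := fun v => by
        simp only [toAdd_ofAdd, Matrix.mulVec_mulVec, ← Matrix.GeneralLinearGroup.coe_mul,
          mul_inv_cancel, Units.val_one, Matrix.one_mulVec, ofAdd_toAdd]
      map_mul' := fun v w => by simp only [toAdd_mul, Matrix.mulVec_add, ofAdd_add] }
  map_one' := by ext v; simp
  map_mul' := fun g h => by
    refine MulEquiv.ext fun v => ?_
    show Multiplicative.ofAdd (((g * h : GL (Fin 2) ℤ) : Matrix (Fin 2) (Fin 2) ℤ).mulVec v.toAdd) =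
      Multiplicative.ofAdd ((g : Matrix (Fin 2) (Fin 2) ℤ).mulVec
        ((h : Matrix (Fin 2) (Fin 2) ℤ).mulVec v.toAdd))
    rw [Matrix.mulVec_mulVec, Matrix.GeneralLinearGroup.coe_mul]

def slPhi : Matrix.SpecialLinearGroup (Fin 2) ℤ →* MulAut (Multiplicative (Fin 2 → ℤ)) :=
  glPhi.comp Matrix.SpecialLinearGroup.toGL
end HeisSl

namespace HeisAux
lemma det_entries (A : Matrix.SpecialLinearGroup (Fin 2) ℤ) :
    A.1 0 0 * A.1 1 1 - A.1 0 1 * A.1 1 0 = 1 := by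
  have h := A.2
  rw [Matrix.det_fin_two] at h
  linarith

lemma f_congr (p q r s u₁ u₂ p' q' r' s' u₁' u₂' : ℤ) (x : Heis)
    (h1 : p = p') (h2 : q = q') (h3 : r = r') (h4 : s = s')
    (h5 : u₁ = u₁') (h6 : u₂ = u₂') :
    f p q r s u₁ u₂ x = f p' q' r' s' u₁' u₂' x := by
  subst h1 h2 h3 h4 h5 h6; rfl

lemma slPhi_toAdd (A : Matrix.SpecialLinearGroup (Fin 2) ℤ)
    (v : Multiplicative (Fin 2 → ℤ)) :
    (slPhi A v).toAdd = (A.1).mulVec v.toAdd := rfl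

def Phi0 : (Multiplicative (Fin 2 → ℤ)) ⋊[slPhi] Matrix.SpecialLinearGroup (Fin 2) ℤ →*
    MulAut Heis :=
  MonoidHom.mk'
    (fun g => mkAut (g.right.1 0 0) (g.right.1 0 1) (g.right.1 1 0) (g.right.1 1 1)
      (g.left.toAdd 1 * g.right.1 0 0 - g.left.toAdd 0 * g.right.1 1 0)
      (g.left.toAdd 1 * g.right.1 0 1 - g.left.toAdd 0 * g.right.1 1 1) (det_entries g.right))
    (by
      intro g₁ g₂
      refine MulEquiv.ext fun x => ?_
      rw [MulAut.mul_apply]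
      simp only [mkAut_apply]
      rw [f_comp _ _ _ _ _ _ _ _ _ _ _ _ (det_entries g₁.right) (det_entries g₂.right)]
      have hd1 := det_entries g₁.right
      simp only [SemidirectProduct.mul_right, SemidirectProduct.mul_left,
        Matrix.SpecialLinearGroup.coe_mul, Matrix.mul_apply, Fin.sum_univ_two,
        toAdd_mul, Pi.add_apply, slPhi_toAdd, Matrix.mulVec, dotProduct]
      apply f_congr
      · ring
      · ring
      · ring
      · ring
      · linear_combination (g₂.right.1 0 0 * g₂.left.toAdd 1 -
          g₂.right.1 1 0 * g₂.left.toAdd 0) * hd1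
      · linear_combination (g₂.right.1 0 1 * g₂.left.toAdd 1 -
          g₂.right.1 1 1 * g₂.left.toAdd 0) * hd1)
lemma comm_eq (g h : Heis) : g * h * g⁻¹ * h⁻¹ = ⟨0, 0, g.a*h.b - h.a*g.b⟩ := by
  ext <;> simp <;> ring

lemma agree (p q r s u₁ u₂ : ℤ) (h : p*s - q*r = 1) (ω : MulAut Heis)
    (hX : f p q r s u₁ u₂ ⟨1,0,0⟩ = ω ⟨1,0,0⟩)
    (hY : f p q r s u₁ u₂ ⟨0,1,0⟩ = ω ⟨0,1,0⟩)
    (hZ : f p q r s u₁ u₂ ⟨0,0,1⟩ = ω ⟨0,0,1⟩) (x : Heis) :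
    f p q r s u₁ u₂ x = ω x := by
  have hM : ∀ y, f p q r s u₁ u₂ y = mkAut p q r s u₁ u₂ h y := fun y => rfl
  rw [hM, decomp x, map_mul, map_mul, map_zpow, map_zpow, map_zpow,
    ← hM, ← hM, ← hM, hX, hY, hZ,
    ← map_zpow, ← map_zpow, ← map_zpow, ← map_mul, ← map_mul, ← decomp]


end HeisAux

open HeisAux in
/-- The group `Aut⁺(Heis)` of automorphisms of the Heisenberg group acting identically on the
center is isomorphic to `(ℤ ⊕ ℤ) ⋊ SL(2,ℤ)` for the natural matrix action. -/
theorem heis_aut_plus_semidirect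
    (Autp : Subgroup (MulAut Heis))
    (hAutp : ∀ ω : MulAut Heis,
      ω ∈ Autp ↔ ∀ x ∈ Subgroup.center Heis, ω x = x) :
    Nonempty (Autp ≃*
      (Multiplicative (Fin 2 → ℤ)) ⋊[slPhi] Matrix.SpecialLinearGroup (Fin 2) ℤ) := by

  have hmem : ∀ g, Phi0 g ∈ Autp := by
    intro g
    rw [hAutp]
    intro x hx
    obtain ⟨ha, hb⟩ := center_ab hx
    have hx' : x = ⟨0, 0, x.c⟩ := by ext <;> simp [ha, hb]
    rw [hx']
    exact f_central _ _ _ _ _ _ _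
  set Φ : (Multiplicative (Fin 2 → ℤ)) ⋊[slPhi] Matrix.SpecialLinearGroup (Fin 2) ℤ →*
      Autp := Phi0.codRestrict Autp hmem with hΦ
  have hinj : Function.Injective Φ := by
    rw [injective_iff_map_eq_one]
    intro g hg
    have hg' : Phi0 g = 1 := congrArg Subtype.val hg
    have h1 := congrArg (fun e : MulAut Heis => e ⟨1,0,0⟩) hg'
    have h2 := congrArg (fun e : MulAut Heis => e ⟨0,1,0⟩) hg'
    simp only [MulAut.one_apply] at h1 h2
    have h1' : f (g.right.1 0 0) (g.right.1 0 1) (g.right.1 1 0) (g.right.1 1 1)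
      (g.left.toAdd 1 * g.right.1 0 0 - g.left.toAdd 0 * g.right.1 1 0)
      (g.left.toAdd 1 * g.right.1 0 1 - g.left.toAdd 0 * g.right.1 1 1) ⟨1,0,0⟩ = ⟨1,0,0⟩ := h1
    have h2' : f (g.right.1 0 0) (g.right.1 0 1) (g.right.1 1 0) (g.right.1 1 1)
      (g.left.toAdd 1 * g.right.1 0 0 - g.left.toAdd 0 * g.right.1 1 0)
      (g.left.toAdd 1 * g.right.1 0 1 - g.left.toAdd 0 * g.right.1 1 1) ⟨0,1,0⟩ = ⟨0,1,0⟩ := h2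
    have ha1 := congrArg Heis.a h1'
    have hb1 := congrArg Heis.b h1'
    have hc1 := congrArg Heis.c h1'
    have ha2 := congrArg Heis.a h2'
    have hb2 := congrArg Heis.b h2'
    have hc2 := congrArg Heis.c h2'
    simp only [f_a, f_b, f_c] at ha1 hb1 hc1 ha2 hb2 hc2
    have hp : g.right.1 0 0 = 1 := by omega
    have hr : g.right.1 1 0 = 0 := by omega
    have hq : g.right.1 0 1 = 0 := by omega
    have hs : g.right.1 1 1 = 1 := by omega
    rw [hp, hq, hr, hs, D_id] at hc1 hc2
    have hv1 : g.left.toAdd 1 = 0 := by omega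
    have hv0 : g.left.toAdd 0 = 0 := by omega
    ext
    case left =>
      have h0 : Multiplicative.toAdd g.left = 0 := by
        funext i; fin_cases i; exacts [hv0, hv1]
      simpa using congrFun h0 _
    case right =>
      rename_i i j
      fin_cases i <;> fin_cases j <;>
        simp [hp, hq, hr, hs, Matrix.one_apply]
  have hsurj : Function.Surjective Φ := by
    rintro ⟨ω, hω⟩
    have hzfix : ∀ c : ℤ, ω ⟨0,0,c⟩ = ⟨0,0,c⟩ := fun c => (hAutp ω).mp hω _ (central_mem c)
    set P := ω ⟨1,0,0⟩ with hP
    set Q := ω ⟨0,1,0⟩ with hQ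
    have hdet : P.a * Q.b - Q.a * P.b = 1 := by
      have hcom : (⟨0,0,1⟩ : Heis) = ⟨1,0,0⟩ * ⟨0,1,0⟩ * (⟨1,0,0⟩:Heis)⁻¹ * (⟨0,1,0⟩:Heis)⁻¹ := by
        ext <;> simp
      have h1 : (⟨0,0,1⟩ : Heis) = P * Q * P⁻¹ * Q⁻¹ := by
        conv_lhs => rw [← hzfix 1, hcom]
        rw [map_mul, map_mul, map_mul, map_inv, map_inv]
      rw [comm_eq] at h1
      exact (congrArg Heis.c h1).symm
    set p := P.a with hp; set q := Q.a with hq; set r := P.b with hr; set s := Q.b with hs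
    have hdet' : p * s - q * r = 1 := hdet
    set u₁ := P.c - D p q r s 1 0 with hu₁
    set u₂ := Q.c - D p q r s 0 1 with hu₂
    refine ⟨⟨Multiplicative.ofAdd ![u₁*q - u₂*p, u₁*s - u₂*r],
      ⟨!![p, q; r, s], by rw [Matrix.det_fin_two_of]; linarith⟩⟩, ?_⟩
    apply Subtype.ext
    refine MulEquiv.ext fun x => ?_
    show f _ _ _ _ _ _ x = ω x
    refine Eq.trans (f_congr _ _ _ _ _ _ p q r s u₁ u₂ x ?_ ?_ ?_ ?_ ?_ ?_)
      (agree p q r s u₁ u₂ hdet' ω ?_ ?_ ?_ x)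
    · simp
    · simp
    · simp
    · simp
    · simp only [SemidirectProduct.mk_eq_inl_mul_inr]
      simp
      linear_combination u₁ * hdet'
    · simp only [SemidirectProduct.mk_eq_inl_mul_inr]
      simp
      linear_combination u₂ * hdet'
    · ext <;> simp [← hP] <;> omega
    · ext <;> simp [← hQ] <;> omega
    · rw [hzfix 1]; ext <;> simp [D_zero]
  exact ⟨(MulEquiv.ofBijective Φ ⟨hinj, hsurj⟩).symm⟩
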